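/- For every x ∈ ℂ, the sequence r_p(x) = p!·f_p(x) is the unique solution of the linear recursion r_{p+1}(x) + p·x·r_{p−1}(x) = (2+x+p)·r_p(x) for p ≥ 1 with initial conditions r₀(x) = 1 and r₁(x) = 2+x; explicitly, for all p ≥ 1: (p+1)!·f_{p+1}(x) + p·x·(p−1)!·f_{p−1}(x) = (2+x+p)·p!·f_p(x), with f₀(x) = 1 and f₁(x) = 2+x. -/

import Mathlib

open ComplexConjugate Filter MeasureTheory Topology

noncomputable section

/-- Exponential polynomial `e_p(x) = ∑_{k=0}^p x^k/k!`. -/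
def epol (p : ℕ) (x : ℂ) : ℂ := ∑ k ∈ Finset.range (p + 1), x ^ k / (Nat.factorial k : ℂ)

/-- `f_p(x) = (p+1)·e_p(x) - x·e_{p-1}(x)`, with `e_{-1} ≡ 0`. -/
def fpol (p : ℕ) (x : ℂ) : ℂ :=
  ((p : ℂ) + 1) * epol p x - x * (if p = 0 then 0 else epol (p - 1) x)

/-- The polynomial `𝔉_n(x,y,z)`. -/
def Fgoth (n : ℕ) (x y z : ℂ) : ℂ :=
  epol n (x * y) * epol n (x * z) - epol n (x * y * z) * epol n x * (1 - x * (1 - y) * (1 - z))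
    + ((1 - y) * (1 - z) / (Nat.factorial n : ℂ)) *
      (((x * y * z) ^ (n + 1) * epol n x - x ^ (n + 1) * epol n (x * y * z)) / (1 - y * z))

/-- The weight `ω(x,y|λ,μ) = (1/π)(1+(x-λ)(y-μ))e^{-xy}`. -/
def omegaW (x y l m : ℂ) : ℂ :=
  (1 / (Real.pi : ℂ)) * (1 + (x - l) * (y - m)) * Complex.exp (-(x * y))

/-- The finite-`N` reduced kernel `κ^{(N)}(x̄,y|λ,λ̄)`. -/
def kapN (N : ℕ) (xb y l lb : ℂ) : ℂ :=
  (((N : ℂ) + 1) * Fgoth (N + 1) (l * lb) (xb / lb) (y / l)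
      - l * lb * Fgoth N (l * lb) (xb / lb) (y / l)) /
    ((xb - lb) ^ 2 * (y - l) ^ 2 * fpol N (l * lb))

/-- The finite-`N` kernel `K₁₁^{(N)}(x,x̄,y,ȳ|λ,λ̄)`. -/
def K11N (N : ℕ) (x xb y yb l lb : ℂ) : ℂ := omegaW x xb l lb * kapN N xb y l lb

/-- The finite-`N` kernel `K₁₂^{(N)}(x,x̄,y,ȳ|u,ū,v,v̄)`. -/
def K12N (N : ℕ) (x xb y yb u ub v vb : ℂ) : ℂ :=
  omegaW x xb u vb / kapN N ub v u vb *
    (kapN N ub v u vb * kapN N xb y u vb - kapN N ub y u vb * kapN N xb v u vb)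

/-- `Z_N = π^N ∏_{j=1}^N j!`. -/
def Zconst (N : ℕ) : ℂ := (Real.pi : ℂ) ^ N * ∏ j ∈ Finset.Icc 1 N, (Nat.factorial j : ℂ)

/-- Vandermonde product `∏_{0 ≤ j < i < n} (v i - v j)`. -/
def vdm (n : ℕ) (v : ℕ → ℂ) : ℂ := ∏ i ∈ Finset.range n, ∏ j ∈ Finset.range i, (v i - v j)

/-- Pads the `k` conditioned eigenvalues `lam` with the `N-k` integration variables `w`. -/
def pad (N k : ℕ) (lam : Fin k → ℂ) (w : Fin (N - k) → ℂ) (m : ℕ) : ℂ :=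
  if h : m < k then lam ⟨m, h⟩ else if h2 : m - k < N - k then w ⟨m - k, h2⟩ else 0

/-- Conditional diagonal overlap `D₁₁^{(N,k)}`. -/
def D11 (N k : ℕ) (lam : Fin k → ℂ) : ℂ :=
  (Nat.factorial N : ℂ) / (Nat.factorial (N - k) : ℂ) / Zconst N *
    Complex.exp (-(pad N k lam (fun _ => 0) 0 * conj (pad N k lam (fun _ => 0) 0))) *
    ∫ w : Fin (N - k) → ℂ,
      vdm (N - 1) (fun m => pad N k lam w (m + 1)) *
        conj (vdm (N - 1) (fun m => pad N k lam w (m + 1))) *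
        ∏ m ∈ Finset.Icc 1 (N - 1),
          ((1 + (pad N k lam w m - pad N k lam w 0) *
                (conj (pad N k lam w m) - conj (pad N k lam w 0))) *
            Complex.exp (-(pad N k lam w m * conj (pad N k lam w m))))

/-- Conditional off-diagonal overlap `D₁₂^{(N,k)}`. -/
def D12 (N k : ℕ) (lam : Fin k → ℂ) : ℂ :=
  -((Nat.factorial N : ℂ) / (Nat.factorial (N - k) : ℂ) / Zconst N *
    Complex.exp (-(pad N k lam (fun _ => 0) 0 * conj (pad N k lam (fun _ => 0) 0)
        + pad N k lam (fun _ => 0) 1 * conj (pad N k lam (fun _ => 0) 1))) *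
    ∫ w : Fin (N - k) → ℂ,
      vdm (N - 1) (fun m => pad N k lam w (m + 1)) *
        vdm (N - 1) (fun m => conj (pad N k lam w (if m = 0 then 0 else m + 1))) *
        ∏ m ∈ Finset.Icc 2 (N - 1),
          ((1 + (pad N k lam w m - pad N k lam w 0) *
                (conj (pad N k lam w m) - conj (pad N k lam w 1))) *
            Complex.exp (-(pad N k lam w m * conj (pad N k lam w m)))))

/-- `D̃₁₁^{(N,k)}` with the conjugated variables treated as independent. -/
def D11t (N k : ℕ) (lam mu : Fin k → ℂ) : ℂ :=
  (Nat.factorial N : ℂ) / (Nat.factorial (N - k) : ℂ) / Zconst N *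
    Complex.exp (-(pad N k lam (fun _ => 0) 0 * pad N k mu (fun _ => 0) 0)) *
    ∫ w : Fin (N - k) → ℂ,
      vdm (N - 1) (fun m => pad N k lam w (m + 1)) *
        vdm (N - 1) (fun m => pad N k mu (fun i => conj (w i)) (m + 1)) *
        ∏ m ∈ Finset.Icc 1 (N - 1),
          ((1 + (pad N k lam w m - pad N k lam w 0) *
                (pad N k mu (fun i => conj (w i)) m - pad N k mu (fun i => conj (w i)) 0)) *
            Complex.exp (-(pad N k lam w m * pad N k mu (fun i => conj (w i)) m)))

/-- `D̃₁₂^{(N,k)}` with the conjugated variables treated as independent. -/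
def D12t (N k : ℕ) (lam mu : Fin k → ℂ) : ℂ :=
  -((Nat.factorial N : ℂ) / (Nat.factorial (N - k) : ℂ) / Zconst N *
    Complex.exp (-(pad N k lam (fun _ => 0) 0 * pad N k mu (fun _ => 0) 0
        + pad N k lam (fun _ => 0) 1 * pad N k mu (fun _ => 0) 1)) *
    ∫ w : Fin (N - k) → ℂ,
      vdm (N - 1) (fun m => pad N k lam w (m + 1)) *
        vdm (N - 1) (fun m => pad N k mu (fun i => conj (w i)) (if m = 0 then 0 else m + 1)) *
        ∏ m ∈ Finset.Icc 2 (N - 1),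
          ((1 + (pad N k lam w m - pad N k lam w 0) *
                (pad N k mu (fun i => conj (w i)) m - pad N k mu (fun i => conj (w i)) 1)) *
            Complex.exp (-(pad N k lam w m * pad N k mu (fun i => conj (w i)) m))))

/-- Bulk weight `ω^{bulk}`. -/
def omegaBulk (u ub l lb : ℂ) : ℂ :=
  (1 / (Real.pi : ℂ)) * (1 + (u - l) * (ub - lb)) * Complex.exp (-((u - l) * (ub - lb)))

/-- Bulk reduced kernel `κ^{bulk}(ū,v|λ,λ̄) = (1+(w-1)e^w)/w²`, `w = (ū-λ̄)(v-λ)`. -/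
def kapBulk (ub v l lb : ℂ) : ℂ :=
  (1 + ((ub - lb) * (v - l) - 1) * Complex.exp ((ub - lb) * (v - l))) /
    ((ub - lb) * (v - l)) ^ 2

def K11bulk (u ub v vb l lb : ℂ) : ℂ := omegaBulk u ub l lb * kapBulk ub v l lb

def K12bulk (x xb y yb u ub v vb : ℂ) : ℂ :=
  omegaBulk x xb u vb / kapBulk ub v u vb *
    (kapBulk ub v u vb * kapBulk xb y u vb - kapBulk ub y u vb * kapBulk xb v u vb)

/-- `F(a) = (2π)^{-1/2} ∫₀^∞ e^{-(a+t)²/2} dt`, entire continuation of `(1/2)erfc(a/√2)`. -/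
def Ferf (a : ℂ) : ℂ :=
  (1 / (Real.sqrt (2 * Real.pi) : ℂ)) *
    ∫ t in Set.Ioi (0 : ℝ), Complex.exp (-((a + (t : ℂ)) ^ 2) / 2)

/-- The function `H(a,b,c,d,f)` from the edge scaling limit. -/
def Hedge (a b c d f : ℂ) : ℂ :=
  -(Real.sqrt (2 * Real.pi) : ℂ) /
      (1 - (Real.sqrt (2 * Real.pi) : ℂ) * a * Complex.exp (a ^ 2 / 2) * Ferf a) *
    deriv (fun x : ℂ =>
      Complex.exp ((a + x) ^ 2 / 2) *
        (Complex.exp (-f) * Ferf (b + x) * Ferf (c + x) - Ferf (d + x) * Ferf (a + x) +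
          f * Ferf d * Ferf (a + x))) 0

def omegaEdge (x xb l lb : ℂ) : ℂ :=
  (1 / (Real.pi : ℂ)) * (1 + (x - l) * (xb - lb)) * Complex.exp (-(x * xb))

def kapEdge (xb y l lb : ℂ) : ℂ :=
  Complex.exp (xb * y) * Hedge (l + lb) (l + xb) (y + lb) (y + xb) ((l - y) * (lb - xb)) /
    ((l - y) ^ 2 * (lb - xb) ^ 2)

def K11edge (x xb y yb l lb : ℂ) : ℂ := omegaEdge x xb l lb * kapEdge xb y l lb

def K12edge (x xb y yb u ub v vb : ℂ) : ℂ :=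
  omegaEdge x xb u vb / kapEdge ub v u vb *
    (kapEdge ub v u vb * kapEdge xb y u vb - kapEdge ub y u vb * kapEdge xb v u vb)

/-- Index embedding `Fin (k-1) → Fin k`, `i ↦ i+1`. -/
def sh1 {k : ℕ} (i : Fin (k - 1)) : Fin k := ⟨i.val + 1, by have := i.isLt; omega⟩

/-- Index embedding `Fin (k-2) → Fin k`, `i ↦ i+2`. -/
def sh2 {k : ℕ} (i : Fin (k - 2)) : Fin k := ⟨i.val + 2, by have := i.isLt; omega⟩

def ev0 {k : ℕ} (lam : Fin k → ℂ) : ℂ := if h : 0 < k then lam ⟨0, h⟩ else 0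

def ev1 {k : ℕ} (lam : Fin k → ℂ) : ℂ := if h : 1 < k then lam ⟨1, h⟩ else 0

/-- The edge overlap function `D₁₁^{edge,k}`. -/
def D11edgeF (k : ℕ) (lam : Fin k → ℂ) : ℂ :=
  (1 / (Real.sqrt (2 * Real.pi ^ 3) : ℂ)) *
    (Complex.exp (-((ev0 lam + conj (ev0 lam)) ^ 2 / 2)) -
      (Real.sqrt (2 * Real.pi) : ℂ) * (ev0 lam + conj (ev0 lam)) *
        Ferf (ev0 lam + conj (ev0 lam))) *
    Matrix.det (Matrix.of fun i j : Fin (k - 1) =>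
      K11edge (lam (sh1 i)) (conj (lam (sh1 i))) (lam (sh1 j)) (conj (lam (sh1 j)))
        (ev0 lam) (conj (ev0 lam)))

/-- The bulk overlap function `D₁₁^{bulk,k}`. -/
def D11bulkF (k : ℕ) (lam : Fin k → ℂ) : ℂ :=
  (1 / (Real.pi : ℂ)) *
    Matrix.det (Matrix.of fun i j : Fin (k - 1) =>
      K11bulk (lam (sh1 i)) (conj (lam (sh1 i))) (lam (sh1 j)) (conj (lam (sh1 j)))
        (ev0 lam) (conj (ev0 lam)))

/-- The bulk off-diagonal overlap function `D₁₂^{bulk,k}`. -/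
def D12bulkF (k : ℕ) (lam : Fin k → ℂ) : ℂ :=
  -(1 / (Real.pi : ℂ) ^ 2) * kapBulk (conj (ev0 lam)) (ev1 lam) (ev0 lam) (conj (ev1 lam)) *
    Matrix.det (Matrix.of fun i j : Fin (k - 2) =>
      K12bulk (lam (sh2 i)) (conj (lam (sh2 i))) (lam (sh2 j)) (conj (lam (sh2 j)))
        (ev0 lam) (conj (ev0 lam)) (ev1 lam) (conj (ev1 lam)))

/-- The first-order differential operator `𝔇_m = 1 - (λ_m-λ₁)(μ_m-μ₁) - (λ_m-λ₁)∂/∂λ_m`. -/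
def Dop {k : ℕ} (m : Fin k) (g : (Fin k → ℂ) → (Fin k → ℂ) → ℂ)
    (lam mu : Fin k → ℂ) : ℂ :=
  (1 - (lam m - lam ⟨0, m.pos⟩) * (mu m - mu ⟨0, m.pos⟩)) * g lam mu -
    (lam m - lam ⟨0, m.pos⟩) * deriv (fun t => g (Function.update lam m t) mu) (lam m)

/-- Holomorphic extension `ρ̃` of the bulk `k`-point Ginibre correlation function. -/
def rhoT (k : ℕ) (lam mu : Fin k → ℂ) : ℂ :=
  ((Real.pi : ℂ) ^ k)⁻¹ * Complex.exp (-(∑ m, lam m * mu m)) *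
    Matrix.det (Matrix.of fun i j : Fin k => Complex.exp (mu i * lam j))

/-- Holomorphic extension `D̃₁₁^{bulk,k}` of the bulk conditional diagonal overlap. -/
def D11tBulk (k : ℕ) (lam mu : Fin k → ℂ) : ℂ :=
  ((Real.pi : ℂ) ^ k)⁻¹ *
    (∏ i : Fin (k - 1),
      (1 + (lam (sh1 i) - ev0 lam) * (mu (sh1 i) - ev0 mu)) /
          ((lam (sh1 i) - ev0 lam) ^ 2 * (mu (sh1 i) - ev0 mu) ^ 2) *
        Complex.exp (-((lam (sh1 i) - ev0 lam) * (mu (sh1 i) - ev0 mu)))) *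
    Matrix.det (Matrix.of fun m n : Fin (k - 1) =>
      1 - (1 - (mu (sh1 m) - ev0 mu) * (lam (sh1 n) - ev0 lam)) *
        Complex.exp ((mu (sh1 m) - ev0 mu) * (lam (sh1 n) - ev0 lam)))

/-- Monic bi-orthogonal polynomials `P_k(z)` for the weight `ω(·,·|λ,λ̄)`. -/
def Ppoly (l : ℂ) (k : ℕ) (z : ℂ) : ℂ :=
  ∑ m ∈ Finset.range (k + 1), l ^ (k - m) * (fpol m (l * conj l) / fpol k (l * conj l)) * z ^ m

/-- The reduced kernel `G^{(N)}(x,y,z)` as a double sum. -/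
def Gker (N : ℕ) (x y z : ℂ) : ℂ :=
  ∑ m ∈ Finset.range (N + 1), ∑ n ∈ Finset.range (N + 1),
    fpol m x * fpol n x * y ^ m * z ^ n *
      ∑ k ∈ Finset.Icc (max m n) N,
        x ^ k / ((Nat.factorial (k + 1) : ℂ) * fpol k x * fpol (k + 1) x)

end

lemma epol_succ' (p : ℕ) (x : ℂ) :
    epol (p + 1) x = epol p x + x ^ (p + 1) / (Nat.factorial (p + 1) : ℂ) := by
  simp [epol, Finset.sum_range_succ]

lemma fpol_zero' (x : ℂ) : fpol 0 x = 1 := by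
  simp [fpol, epol]

lemma fpol_one' (x : ℂ) : fpol 1 x = 2 + x := by
  simp [fpol, epol, Finset.sum_range_succ]
  ring

lemma S_succ (q : ℕ) (x : ℂ) :
    (Nat.factorial (q + 1) : ℂ) * epol (q + 1) x
      = ((q : ℂ) + 1) * ((Nat.factorial q : ℂ) * epol q x) + x ^ (q + 1) := by
  have hq : (Nat.factorial q : ℂ) ≠ 0 := by exact_mod_cast Nat.factorial_ne_zero q
  have h1 : ((q : ℂ) + 1) ≠ 0 := Nat.cast_add_one_ne_zero q
  rw [epol_succ', Nat.factorial_succ]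
  push_cast
  field_simp

lemma fpol_fact (q : ℕ) (x : ℂ) :
    (Nat.factorial (q + 1) : ℂ) * fpol (q + 1) x
      = ((q : ℂ) + 2) * ((Nat.factorial (q + 1) : ℂ) * epol (q + 1) x)
        - ((q : ℂ) + 1) * x * ((Nat.factorial q : ℂ) * epol q x) := by
  simp only [fpol, show q + 1 ≠ 0 by omega, if_false, Nat.add_sub_cancel, Nat.factorial_succ]
  push_cast
  ring

lemma fpol_rec (x : ℂ) (p : ℕ) (hp : 1 ≤ p) :
    (Nat.factorial (p + 1) : ℂ) * fpol (p + 1) x +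
        (p : ℂ) * x * (Nat.factorial (p - 1) : ℂ) * fpol (p - 1) x =
      (2 + x + (p : ℂ)) * (Nat.factorial p : ℂ) * fpol p x := by
  match p, hp with
  | 1, _ =>
    simp [fpol, epol, Finset.sum_range_succ, Nat.factorial]
    ring
  | (q + 2), _ =>
    have e1 := fpol_fact (q + 2) x
    have e2 := fpol_fact (q + 1) x
    have e3 := fpol_fact q x
    have s1 := S_succ (q + 2) x
    have s2 := S_succ (q + 1) x
    have s3 := S_succ q x
    simp only [show q + 1 + 1 = q + 2 from rfl, show q + 2 + 1 = q + 3 from rfl,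
      show q + 2 - 1 = q + 1 from rfl] at e1 e2 e3 s1 s2 s3 ⊢
    push_cast at e1 e2 e3 s1 s2 s3 ⊢
    linear_combination e1 + ((q : ℂ) + 2) * x * e3 - ((q : ℂ) + 4 + x) * e2
      + ((q : ℂ) + 4) * s1 - 2 * ((q : ℂ) + 3) * x * s2 + ((q : ℂ) + 2) * x ^ 2 * s3

/-- `r_p(x) = p!·f_p(x)` is the unique solution of the linear recursion
`r_{p+1} + p·x·r_{p-1} = (2+x+p)·r_p` with `r₀ = 1`, `r₁ = 2+x`. -/
theorem statement13 (x : ℂ) :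
    fpol 0 x = 1 ∧ fpol 1 x = 2 + x ∧
    (∀ p : ℕ, 1 ≤ p →
      (Nat.factorial (p + 1) : ℂ) * fpol (p + 1) x +
          (p : ℂ) * x * (Nat.factorial (p - 1) : ℂ) * fpol (p - 1) x =
        (2 + x + (p : ℂ)) * (Nat.factorial p : ℂ) * fpol p x) ∧
    (∀ r : ℕ → ℂ, r 0 = 1 → r 1 = 2 + x →
      (∀ p : ℕ, 1 ≤ p →
        r (p + 1) + (p : ℂ) * x * r (p - 1) = (2 + x + (p : ℂ)) * r p) →
      ∀ p : ℕ, r p = (Nat.factorial p : ℂ) * fpol p x) := by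
  refine ⟨fpol_zero' x, fpol_one' x, fpol_rec x, ?_⟩
  intro r h0 h1 hrec
  have key : ∀ p : ℕ, r p = (Nat.factorial p : ℂ) * fpol p x ∧
      r (p + 1) = (Nat.factorial (p + 1) : ℂ) * fpol (p + 1) x := by
    intro p
    induction p with
    | zero =>
      constructor
      · simp [h0, fpol_zero']
      · simp [h1, fpol_one', Nat.factorial]
    | succ n ih =>
      refine ⟨ih.2, ?_⟩
      have h2 := hrec (n + 1) (by omega)
      simp only [Nat.add_sub_cancel] at h2
      have h3 := fpol_rec x (n + 1) (by omega)
      simp only [Nat.add_sub_cancel] at h3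
      have : r (n + 1 + 1) = (2 + x + ((n : ℂ) + 1)) * r (n + 1) -
          ((n : ℂ) + 1) * x * r n := by
        push_cast at h2 ⊢; linear_combination h2
      rw [this, ih.1, ih.2]
      push_cast at h3 ⊢
      linear_combination -h3
  exact fun p => (key p).1
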